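/- arXiv:2603.16034 — 4 statements merged into one kernel-verified Lean document; each statement's English description precedes it below -/
import Mathlib

section
/- Fix an integer h ≥ 2 and let s_k = (h+1)^(2k)·h and t_k = (h+1)^(2k+1) for k ∈ ℕ. Let D = {ℓ ∈ ℕ : ℓ ≡ 0 (mod h+1) and s_k < ℓ < t_k for some k ∈ ℕ}. Then limsup_{n→∞} |D ∩ [0,n)| / n = 1/(h·(h+2)) and liminf_{n→∞} |D ∩ [0,n)| / n = 1/(h²·(h+1)·(h+2)). -/
/-!
Write `q = h + 1`. Between `t_K` and `t_{K+1} = q² t_K` the elements of `D` are exactly the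
multiples of `q` in `(s_{K+1}, t_{K+1})`, where `s_{K+1} = q h t_K`; there are `t_K - 1` of them.
Summing over the blocks gives `h(h+2) |D ∩ [0, t_K)| = t_K - q - K h(h+2)`, so the counting ratio
tends to `1/(h(h+2))` along `t_K`, and to `1/(q h · h(h+2))` along `s_{K+1}`, where the count has
not moved since `t_K`. Inside a block the ratio first falls (nothing is added before `s_{K+1}`) and
then rises (one element every `q` steps, a rate above `1/(h(h+2))`), so these two subsequences
realise the limsup and the liminf.
-/

/-- `s_k = (h+1)^(2k) · h`. -/
def sk (h k : ℕ) : ℕ := (h + 1) ^ (2 * k) * h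

/-- `t_k = (h+1)^(2k+1)`. -/
def tk (h k : ℕ) : ℕ := (h + 1) ^ (2 * k + 1)

open Finset Filter Topology

theorem card_filter_dvd_Ioc_of_dvd {d a : ℕ} (b : ℕ) (hd : d ∣ a) :
    #{x ∈ Ioc a b | d ∣ x} = (b - a) / d := by
  rw [← Nat.card_multiples]
  symm
  refine card_bij (fun e _ => a + (e + 1)) ?_ (fun _ _ _ _ h => by omega) ?_
  · intro e he
    simp only [mem_filter, mem_range, mem_Ioc] at he ⊢
    exact ⟨by omega, (Nat.dvd_add_right hd).2 he.2⟩
  · intro x hx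
    simp only [mem_filter, mem_range, mem_Ioc, exists_prop] at hx ⊢
    refine ⟨x - a - 1, ⟨by omega, ?_⟩, by omega⟩
    rw [← Nat.dvd_add_right hd]
    convert hx.2 using 1
    omega

theorem StrictMono.exists_le_lt_succ {φ : ℕ → ℕ} (hφ : StrictMono φ) {n : ℕ} (hn : φ 0 ≤ n) :
    ∃ K, φ K ≤ n ∧ n < φ (K + 1) := by
  by_contra! H
  have hle : ∀ K, φ K ≤ n := fun K => Nat.rec hn (fun K ih => H K ih) K
  exact (hle (n + 1)).not_gt (Nat.lt_succ_self n |>.trans_le (hφ.id_le (n + 1)))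

theorem le_limsup_of_tendsto_comp {α β : Type*} {l : Filter α} {l' : Filter β} [l'.NeBot]
    {u : α → ℝ} {φ : β → α} {c : ℝ} (hφ : Tendsto φ l' l) (hc : Tendsto (u ∘ φ) l' (𝓝 c))
    (hu : IsBoundedUnder (· ≤ ·) l u) : c ≤ limsup u l :=
  le_of_forall_sub_le fun _ hε => le_limsup_of_frequently_le
    (hφ.frequently (hc.eventually (eventually_ge_nhds (sub_lt_self c hε))).frequently) hu

theorem liminf_le_of_tendsto_comp {α β : Type*} {l : Filter α} {l' : Filter β} [l'.NeBot]
    {u : α → ℝ} {φ : β → α} {c : ℝ} (hφ : Tendsto φ l' l) (hc : Tendsto (u ∘ φ) l' (𝓝 c))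
    (hu : IsBoundedUnder (· ≥ ·) l u) : liminf u l ≤ c :=
  le_of_forall_pos_le_add fun _ hε => liminf_le_of_frequently_le
    (hφ.frequently (hc.eventually (eventually_le_nhds (lt_add_of_pos_right c hε))).frequently) hu

theorem le_liminf_of_forall_le_of_mem_block {u : ℕ → ℝ} {φ : ℕ → ℕ} {g : ℕ → ℝ} {c : ℝ}
    (hφ : StrictMono φ) (hg : Tendsto g atTop (𝓝 c))
    (hgu : ∀ K n, φ K ≤ n → n < φ (K + 1) → g K ≤ u n)
    (hu : IsCoboundedUnder (· ≥ ·) atTop u) : c ≤ liminf u atTop := by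
  refine le_of_forall_sub_le fun ε hε => le_liminf_of_le hu ?_
  obtain ⟨K₀, hK₀⟩ := eventually_atTop.1 (hg.eventually (eventually_ge_nhds (sub_lt_self c hε)))
  filter_upwards [eventually_ge_atTop (φ K₀)] with n hn
  obtain ⟨K, hK, hn'⟩ := hφ.exists_le_lt_succ ((hφ.monotone K₀.zero_le).trans hn)
  exact (hK₀ K (Nat.lt_succ_iff.1 (hφ.lt_iff_lt.1 (hn.trans_lt hn')))).trans (hgu K n hK hn')

namespace ParityPositions

variable {h : ℕ}

theorem tk_zero (h : ℕ) : tk h 0 = h + 1 := by simp [tk]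

theorem sk_lt_tk (h k : ℕ) : sk h k < tk h k := by
  rw [sk, tk, pow_succ]
  exact Nat.mul_lt_mul_of_pos_left (Nat.lt_succ_self h) (by positivity)

theorem sk_succ (h k : ℕ) : sk h (k + 1) = (h + 1) * h * tk h k := by
  rw [sk, tk]; ring

theorem tk_succ (h k : ℕ) : tk h (k + 1) = (h + 1) ^ 2 * tk h k := by
  rw [tk, tk]; ring

theorem tk_pos (h k : ℕ) : 0 < tk h k := by
  rw [tk]; positivity

theorem tk_strictMono (hh : 0 < h) : StrictMono (tk h) :=
  fun _ _ hkk' => Nat.pow_lt_pow_right (by omega) (by omega)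

theorem tk_le_sk_succ (hh : 0 < h) (k : ℕ) : tk h k ≤ sk h (k + 1) := by
  rw [sk_succ]
  exact Nat.le_mul_of_pos_left _ (by positivity)

theorem tk_le_sk_of_lt (hh : 0 < h) {k k' : ℕ} (hkk' : k < k') : tk h k ≤ sk h k' := by
  obtain ⟨j, rfl⟩ := Nat.exists_eq_add_of_lt hkk'
  exact ((tk_strictMono hh).monotone (Nat.le_add_right k j)).trans (tk_le_sk_succ hh _)

def parityPositions (h : ℕ) : Set ℕ := {ℓ | (h + 1) ∣ ℓ ∧ ∃ k, sk h k < ℓ ∧ ℓ < tk h k}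

theorem notMem_parityPositions_of_lt_tk_zero (hh : 0 < h) {ℓ : ℕ} (hℓ : ℓ < tk h 0) :
    ℓ ∉ parityPositions h := by
  rintro ⟨-, k, hsk, htk⟩
  rcases Nat.eq_zero_or_pos k with rfl | hk
  · simp only [sk, tk_zero, mul_zero, pow_zero, one_mul] at hsk htk
    omega
  · exact (tk_le_sk_of_lt hh hk).not_gt (hsk.trans hℓ)

theorem mem_parityPositions_iff_of_mem_block (hh : 0 < h) {K ℓ : ℕ} (h₁ : tk h K ≤ ℓ)
    (h₂ : ℓ < tk h (K + 1)) : ℓ ∈ parityPositions h ↔ (h + 1) ∣ ℓ ∧ sk h (K + 1) < ℓ := by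
  refine ⟨fun ⟨hdvd, k, hsk, htk⟩ => ⟨hdvd, ?_⟩, fun ⟨hdvd, hsk⟩ => ⟨hdvd, K + 1, hsk, h₂⟩⟩
  obtain rfl : k = K + 1 := by
    rcases lt_trichotomy k (K + 1) with hk | rfl | hk
    · exact absurd ((tk_strictMono hh).monotone (Nat.lt_succ_iff.1 hk)) (by omega)
    · rfl
    · exact absurd (tk_le_sk_of_lt hh hk) (by omega)
  exact hsk

open Classical in
noncomputable def parityCount (h n : ℕ) : ℕ := Nat.count (· ∈ parityPositions h) n

theorem natCard_eq_parityCount (h n : ℕ) :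
    Nat.card {ℓ : ℕ // ℓ < n ∧ (h + 1) ∣ ℓ ∧ ∃ k, sk h k < ℓ ∧ ℓ < tk h k} = parityCount h n := by
  classical
  rw [parityCount, Nat.count_eq_card_fintype, Fintype.card_eq_nat_card]
  rfl

theorem parityCount_tk_zero (hh : 0 < h) : parityCount h (tk h 0) = 0 := by
  classical
  exact Nat.count_iff_forall_not.2 fun _ hℓ => notMem_parityPositions_of_lt_tk_zero hh hℓ

-- The truncated subtraction makes the last term vanish for `n ≤ sk h (K + 1)`.
theorem parityCount_of_mem_block (hh : 0 < h) {K n : ℕ} (h₁ : tk h K ≤ n)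
    (h₂ : n ≤ tk h (K + 1)) :
    parityCount h n = parityCount h (tk h K) + (n - 1 - sk h (K + 1)) / (h + 1) := by
  classical
  have hblock : {ℓ ∈ Ico (tk h K) n | ℓ ∈ parityPositions h} =
      {ℓ ∈ Ioc (sk h (K + 1)) (n - 1) | (h + 1) ∣ ℓ} := by
    have := tk_le_sk_succ hh K
    ext ℓ
    simp only [mem_filter, mem_Ico, mem_Ioc]
    constructor
    · rintro ⟨⟨h₁', h₂'⟩, hℓ⟩
      have := (mem_parityPositions_iff_of_mem_block hh h₁' (by omega)).1 hℓ
      exact ⟨⟨this.2, by omega⟩, this.1⟩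
    · rintro ⟨⟨h₁', h₂'⟩, hdvd⟩
      exact ⟨⟨by omega, by omega⟩,
        (mem_parityPositions_iff_of_mem_block hh (by omega) (by omega)).2 ⟨hdvd, h₁'⟩⟩
  have hdvd : (h + 1) ∣ sk h (K + 1) := by rw [sk_succ, mul_assoc]; exact dvd_mul_right _ _
  rw [parityCount, parityCount, Nat.count_eq_card_filter_range, Nat.count_eq_card_filter_range,
    range_eq_Ico, range_eq_Ico, ← Ico_union_Ico_eq_Ico (Nat.zero_le _) h₁, filter_union,
    card_union_of_disjoint (disjoint_filter_filter (Ico_disjoint_Ico_consecutive _ _ _)),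
    hblock, card_filter_dvd_Ioc_of_dvd _ hdvd]

theorem parityCount_tk_succ (hh : 0 < h) (K : ℕ) :
    parityCount h (tk h (K + 1)) = parityCount h (tk h K) + (tk h K - 1) := by
  rw [parityCount_of_mem_block hh ((tk_strictMono hh).monotone K.le_succ) le_rfl, tk_succ, sk_succ]
  congr 1
  obtain ⟨t, ht⟩ : ∃ t, tk h K = t + 1 := Nat.exists_eq_succ_of_ne_zero (tk_pos h K).ne'
  have hrem : (h + 1) ^ 2 * (t + 1) - 1 - (h + 1) * h * (t + 1) = t * (h + 1) + h := by
    have : (h + 1) ^ 2 * (t + 1) = (h + 1) * h * (t + 1) + (t * (h + 1) + h) + 1 := by ring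
    omega
  rw [ht, hrem, Nat.add_sub_cancel]
  exact Nat.div_eq_of_lt_le (Nat.le_add_right _ _) (by nlinarith)

theorem parityCount_tk (hh : 0 < h) (K : ℕ) :
    h * (h + 2) * parityCount h (tk h K) + K * (h * (h + 2)) + (h + 1) = tk h K := by
  induction K with
  | zero => rw [parityCount_tk_zero hh, tk_zero]; ring
  | succ K ih =>
    rw [parityCount_tk_succ hh, tk_succ]
    have ht : 1 ≤ tk h K := tk_pos h K
    zify [ht] at ih ⊢
    linear_combination ih

theorem parityCount_sk_succ (hh : 0 < h) (K : ℕ) :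
    parityCount h (sk h (K + 1)) = parityCount h (tk h K) := by
  rw [parityCount_of_mem_block hh (tk_le_sk_succ hh K) (sk_lt_tk h _).le]
  simp

theorem parityCount_mono (h : ℕ) : Monotone (parityCount h) := by
  classical
  exact Nat.count_monotone _

theorem parityCount_le (h n : ℕ) : parityCount h n ≤ n := by
  classical
  exact Nat.count_le _

theorem mul_parityCount_le (hh : 0 < h) (n : ℕ) : h * (h + 2) * parityCount h n ≤ n := by
  rcases lt_or_ge n (tk h 0) with hn | hn
  · have : parityCount h n = 0 :=
      Nat.eq_zero_of_le_zero ((parityCount_mono h hn.le).trans_eq (parityCount_tk_zero hh))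
    simp [this]
  obtain ⟨K, h₁, h₂⟩ := (tk_strictMono hh).exists_le_lt_succ hn
  have hF := parityCount_tk hh K
  rw [parityCount_of_mem_block hh h₁ h₂.le]
  set m := (n - 1 - sk h (K + 1)) / (h + 1) with hm_def
  set F := parityCount h (tk h K)
  rcases Nat.eq_zero_or_pos m with hm | hm
  · rw [hm, add_zero]
    linarith [Nat.zero_le (K * (h * (h + 2)))]
  -- Inside the block the count grows at rate `1/(h+1) > 1/(h(h+2))`, so `n = tk h (K + 1)` is the
  -- worst case.
  have hmn : (h + 1) * m + sk h (K + 1) + 1 ≤ n := by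
    have := Nat.div_mul_le_self (n - 1 - sk h (K + 1)) (h + 1)
    rw [← hm_def, mul_comm] at this
    have : m ≤ (h + 1) * m := Nat.le_mul_of_pos_left m (Nat.succ_pos h)
    omega
  rw [sk_succ] at hmn
  rw [tk_succ] at h₂
  suffices key : (h + 1) * (h * (h + 2) * (F + m)) ≤ (h + 1) * n from
    Nat.le_of_mul_le_mul_left key (Nat.succ_pos h)
  zify at *
  have hq := congrArg (fun x : ℤ => ((h : ℤ) + 1) * x) hF
  have hK : (0 : ℤ) ≤ (h + 1) * (K * (h * (h + 2))) := by positivity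
  nlinarith [mul_le_mul_of_nonneg_left hmn (by positivity : (0:ℤ) ≤ h * (h + 2)),
    mul_le_mul_of_nonneg_left h₂.le (by nlinarith : (0:ℤ) ≤ h * h + h - 1)]

theorem mul_parityCount_tk_le (hh : 0 < h) {K n : ℕ} (h₁ : tk h K ≤ n) (h₂ : n ≤ tk h (K + 1)) :
    n * parityCount h (tk h K) ≤
      sk h (K + 1) * parityCount h n + (h + 1) * parityCount h (tk h K) := by
  rw [parityCount_of_mem_block hh h₁ h₂]
  set m := (n - 1 - sk h (K + 1)) / (h + 1) with hm_def
  set F := parityCount h (tk h K)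
  have hnm : n ≤ sk h (K + 1) + (h + 1) * m + (h + 1) := by
    have := Nat.lt_mul_div_succ (n - 1 - sk h (K + 1)) (by omega : 0 < h + 1)
    rw [← hm_def, mul_add] at this
    omega
  have hFs : (h + 1) * F ≤ sk h (K + 1) := calc
    (h + 1) * F ≤ (h + 1) * tk h K := Nat.mul_le_mul_left _ (parityCount_le h _)
    _ ≤ sk h (K + 1) := by
      rw [sk_succ, mul_assoc]
      exact Nat.mul_le_mul_left _ (Nat.le_mul_of_pos_left _ hh)
  linarith [Nat.mul_le_mul_right F hnm, Nat.mul_le_mul_left m hFs]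

theorem tendsto_tk_atTop (hh : 0 < h) : Tendsto (tk h) atTop atTop :=
  (tk_strictMono hh).tendsto_atTop

theorem cast_tk (h K : ℕ) : (tk h K : ℝ) = (h + 1) * ((h + 1) ^ 2) ^ K := by
  rw [tk, ← pow_mul, ← pow_succ']; push_cast; rfl

theorem tendsto_natCast_div_tk (hh : 0 < h) :
    Tendsto (fun K : ℕ => (K : ℝ) / tk h K) atTop (𝓝 0) := by
  have hr : (1 : ℝ) < ((h : ℝ) + 1) ^ 2 := by
    have : (0 : ℝ) < h := by exact_mod_cast hh
    nlinarith
  simpa [cast_tk, div_mul_eq_div_div_swap] using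
    (tendsto_pow_const_div_const_pow_of_one_lt 1 hr).div_const ((h : ℝ) + 1)

theorem tendsto_div_tk (hh : 0 < h) (c : ℝ) :
    Tendsto (fun K => c / tk h K) atTop (𝓝 0) :=
  tendsto_const_nhds.div_atTop (tendsto_natCast_atTop_atTop.comp (tendsto_tk_atTop hh))

theorem tendsto_parityCount_tk_div (hh : 0 < h) :
    Tendsto (fun K => (parityCount h (tk h K) : ℝ) / tk h K) atTop
      (𝓝 (1 / ((h : ℝ) * ((h : ℝ) + 2)))) := by
  have hform : ∀ K, (parityCount h (tk h K) : ℝ) / tk h K =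
      1 / (h * (h + 2)) - (h + 1) / (h * (h + 2)) / tk h K - K / tk h K := by
    intro K
    have ht : (0 : ℝ) < tk h K := by exact_mod_cast tk_pos h K
    have hF : ((h * (h + 2) * parityCount h (tk h K) + K * (h * (h + 2)) + (h + 1) : ℕ) : ℝ) =
        tk h K := by rw [parityCount_tk hh]
    push_cast at hF
    field_simp
    linear_combination hF
  have hlim := ((tendsto_const_nhds (x := 1 / ((h : ℝ) * (h + 2)))).sub
    (tendsto_div_tk hh (((h : ℝ) + 1) / (h * (h + 2))))).sub (tendsto_natCast_div_tk hh)
  simpa [hform] using hlim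

theorem tendsto_parityCount_tk_div_sk_succ (hh : 0 < h) :
    Tendsto (fun K => (parityCount h (tk h K) : ℝ) / sk h (K + 1)) atTop
      (𝓝 (1 / ((h : ℝ) ^ 2 * ((h : ℝ) + 1) * ((h : ℝ) + 2)))) := by
  have hs : ∀ K, (parityCount h (tk h K) : ℝ) / sk h (K + 1) =
      (parityCount h (tk h K) : ℝ) / tk h K / ((h + 1) * h) := by
    intro K
    rw [sk_succ, div_div]; push_cast; ring_nf
  simp only [hs]
  convert (tendsto_parityCount_tk_div hh).div_const (((h : ℝ) + 1) * h) using 2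
  field_simp

theorem parityCount_div_le (hh : 0 < h) (n : ℕ) :
    (parityCount h n : ℝ) / n ≤ 1 / (h * (h + 2)) := by
  rcases Nat.eq_zero_or_pos n with rfl | hn
  · rw [Nat.cast_zero, div_zero]
    positivity
  rw [div_le_div_iff₀ (by exact_mod_cast hn) (by positivity), one_mul, mul_comm]
  exact_mod_cast mul_parityCount_le hh n

theorem parityCount_tk_div_sk_succ_le (hh : 0 < h) {K n : ℕ} (h₁ : tk h K ≤ n)
    (h₂ : n ≤ tk h (K + 1)) :
    (parityCount h (tk h K) : ℝ) / sk h (K + 1) * (1 - (h + 1) / tk h K) ≤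
      (parityCount h n : ℝ) / n := by
  have ht : (0 : ℝ) < tk h K := by exact_mod_cast tk_pos h K
  have hn : (tk h K : ℝ) ≤ n := by exact_mod_cast h₁
  have hs : (0 : ℝ) < sk h (K + 1) := by exact_mod_cast (tk_pos h K).trans_le (tk_le_sk_succ hh K)
  have key : (n : ℝ) * parityCount h (tk h K) ≤
      sk h (K + 1) * parityCount h n + (h + 1) * parityCount h (tk h K) := by
    exact_mod_cast mul_parityCount_tk_le hh h₁ h₂
  have hn0 : (0 : ℝ) < n := ht.trans_le hn
  calc (parityCount h (tk h K) : ℝ) / sk h (K + 1) * (1 - (h + 1) / tk h K)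
      ≤ (parityCount h (tk h K) : ℝ) / sk h (K + 1) * (1 - (h + 1) / n) := by
        gcongr
    _ = (n * parityCount h (tk h K) - (h + 1) * parityCount h (tk h K)) / (sk h (K + 1) * n) := by
        field_simp
    _ ≤ (parityCount h n : ℝ) / n := by
        rw [div_le_div_iff₀ (by positivity) hn0]
        linarith [mul_le_mul_of_nonneg_right key hn0.le]

theorem limsup_parityCount_div (hh : 0 < h) :
    limsup (fun n : ℕ => (parityCount h n : ℝ) / n) atTop = 1 / ((h : ℝ) * ((h : ℝ) + 2)) :=
  le_antisymm
    (limsup_le_of_le (isCoboundedUnder_le_of_le atTop fun n => by positivity)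
      (Eventually.of_forall (parityCount_div_le hh)))
    (le_limsup_of_tendsto_comp (tendsto_tk_atTop hh) (tendsto_parityCount_tk_div hh)
      (isBoundedUnder_of ⟨_, parityCount_div_le hh⟩))

theorem liminf_parityCount_div (hh : 0 < h) :
    liminf (fun n : ℕ => (parityCount h n : ℝ) / n) atTop =
      1 / ((h : ℝ) ^ 2 * ((h : ℝ) + 1) * ((h : ℝ) + 2)) := by
  have hsk : Tendsto (fun K => sk h (K + 1)) atTop atTop :=
    tendsto_atTop_mono (tk_le_sk_succ hh) (tendsto_tk_atTop hh)
  have hlower := (tendsto_parityCount_tk_div_sk_succ hh).mul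
    ((tendsto_div_tk hh ((h : ℝ) + 1)).const_sub 1)
  rw [sub_zero, mul_one] at hlower
  refine le_antisymm
    (liminf_le_of_tendsto_comp hsk ?_ (isBoundedUnder_of ⟨0, fun n => by positivity⟩))
    (le_liminf_of_forall_le_of_mem_block (tk_strictMono hh) hlower
      (fun K n h₁ h₂ => parityCount_tk_div_sk_succ_le hh h₁ h₂.le)
      (isCoboundedUnder_ge_of_le atTop (parityCount_div_le hh)))
  simpa only [Function.comp_def, parityCount_sk_succ hh] using tendsto_parityCount_tk_div_sk_succ hh

end ParityPositions

/-- Fix `h ≥ 2` and let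
`D = {ℓ : (h+1) ∣ ℓ and s_k < ℓ < t_k for some k}`.  Then
`limsup_n |D ∩ [0,n)|/n = 1/(h(h+2))` and
`liminf_n |D ∩ [0,n)|/n = 1/(h²(h+1)(h+2))`. -/
theorem density_of_parity_positions (h : ℕ) (hh : 2 ≤ h) :
    Filter.limsup (fun n : ℕ =>
        (Nat.card {ℓ : ℕ // ℓ < n ∧ (h + 1) ∣ ℓ ∧ ∃ k, sk h k < ℓ ∧ ℓ < tk h k} : ℝ) / n)
        Filter.atTop = 1 / ((h : ℝ) * ((h : ℝ) + 2)) ∧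
    Filter.liminf (fun n : ℕ =>
        (Nat.card {ℓ : ℕ // ℓ < n ∧ (h + 1) ∣ ℓ ∧ ∃ k, sk h k < ℓ ∧ ℓ < tk h k} : ℝ) / n)
        Filter.atTop = 1 / ((h : ℝ) ^ 2 * ((h : ℝ) + 1) * ((h : ℝ) + 2)) := by
  simp only [ParityPositions.natCard_eq_parityCount]
  exact ⟨ParityPositions.limsup_parityCount_div (by omega),
    ParityPositions.liminf_parityCount_div (by omega)⟩
end

section
/- Fix an integer h ≥ 2 and let s_k = (h+1)^(2k)·h and t_k = (h+1)^(2k+1) for k ∈ ℕ. Let B = {ℓ ∈ ℕ : s_k ≤ ℓ ≤ t_k for some odd k ∈ ℕ}. Then limsup_{n→∞} |B ∩ [0,n)| / n = (h+1)³/((h+1)⁴ − 1) and liminf_{n→∞} |B ∩ [0,n)| / n = 1/(h·((h+1)⁴ − 1)). -/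
/-!
Write `q = h + 1`. The set `B` is the union of the blocks `[s_{2m+1}, t_{2m+1}]`, of length
`q^(4m+2) + 1`, separated by gaps. Along a block the density `|B ∩ [0,n)| / n` increases and along
a gap it decreases, so its limsup is its limit along the block ends `t_{2m+1} + 1` and its liminf
its limit along the block starts `s_{2m+1}`. At these points the count is the geometric sum
`∑_{i<m} q^(4i+2)` plus a term linear in `m`, negligible against the exponentially growing
position.
-/

open Filter Topology

structure IsSawtooth {α : Type*} [Preorder α] (u : ℕ → α) (a b : ℕ → ℕ) : Prop where
  tendsto_atTop : Tendsto a atTop atTop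
  le_peak : ∀ i, a i ≤ b i
  peak_le : ∀ i, b i ≤ a (i + 1)
  monotoneOn : ∀ i, MonotoneOn u (Set.Icc (a i) (b i))
  antitoneOn : ∀ i, AntitoneOn u (Set.Icc (b i) (a (i + 1)))

namespace IsSawtooth

section LinearOrder

variable {α : Type*} [LinearOrder α] {u : ℕ → α} {a b : ℕ → ℕ}

theorem monotone_valley (hs : IsSawtooth u a b) : Monotone a :=
  monotone_nat_of_le_succ fun i => (hs.le_peak i).trans (hs.peak_le i)

theorem tendsto_peak_atTop (hs : IsSawtooth u a b) : Tendsto b atTop atTop :=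
  tendsto_atTop_mono hs.le_peak hs.tendsto_atTop

theorem exists_mem_Icc (hs : IsSawtooth u a b) {I n : ℕ} (hn : a I ≤ n) :
    ∃ i ≥ I, n ∈ Set.Icc (a i) (a (i + 1)) := by
  have hex : ∃ j, n < a j := (hs.tendsto_atTop.eventually_gt_atTop n).exists
  have hI : I < Nat.find hex := by
    by_contra! hle
    exact (Nat.find_spec hex).not_ge (hn.trans' (hs.monotone_valley hle))
  refine ⟨Nat.find hex - 1, by omega, not_lt.1 (Nat.find_min hex (by omega)), ?_⟩
  rw [Nat.sub_add_cancel (by omega)]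
  exact (Nat.find_spec hex).le

theorem le_peak_of_mem_Icc (hs : IsSawtooth u a b) {i n : ℕ}
    (hn : n ∈ Set.Icc (a i) (a (i + 1))) : u n ≤ u (b i) := by
  rcases le_total n (b i) with hnb | hbn
  · exact hs.monotoneOn i ⟨hn.1, hnb⟩ ⟨hs.le_peak i, le_rfl⟩ hnb
  · exact hs.antitoneOn i ⟨le_rfl, hs.peak_le i⟩ ⟨hbn, hn.2⟩ hbn

theorem min_valley_le_of_mem_Icc (hs : IsSawtooth u a b) {i n : ℕ}
    (hn : n ∈ Set.Icc (a i) (a (i + 1))) : min (u (a i)) (u (a (i + 1))) ≤ u n := by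
  rcases le_total n (b i) with hnb | hbn
  · exact min_le_left _ _ |>.trans <|
      hs.monotoneOn i ⟨le_rfl, hs.le_peak i⟩ ⟨hn.1, hnb⟩ hn.1
  · exact min_le_right _ _ |>.trans <|
      hs.antitoneOn i ⟨hbn, hn.2⟩ ⟨hs.peak_le i, le_rfl⟩ hn.2

theorem eventually_le (hs : IsSawtooth u a b) {c : α} (hc : ∀ᶠ i in atTop, u (b i) ≤ c) :
    ∀ᶠ n in atTop, u n ≤ c := by
  obtain ⟨I, hI⟩ := eventually_atTop.1 hc
  filter_upwards [eventually_ge_atTop (a I)] with n hn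
  obtain ⟨i, hiI, hi⟩ := hs.exists_mem_Icc hn
  exact (hs.le_peak_of_mem_Icc hi).trans (hI i hiI)

theorem eventually_ge (hs : IsSawtooth u a b) {c : α} (hc : ∀ᶠ i in atTop, c ≤ u (a i)) :
    ∀ᶠ n in atTop, c ≤ u n := by
  obtain ⟨I, hI⟩ := eventually_atTop.1 hc
  filter_upwards [eventually_ge_atTop (a I)] with n hn
  obtain ⟨i, hiI, hi⟩ := hs.exists_mem_Icc hn
  exact (le_min (hI i hiI) (hI (i + 1) (by omega))).trans (hs.min_valley_le_of_mem_Icc hi)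

end LinearOrder

variable {α : Type*} [ConditionallyCompleteLinearOrder α] [TopologicalSpace α]
  [OrderTopology α] {u : ℕ → α} {a b : ℕ → ℕ} {lo hi : α}

theorem isBoundedUnder_le (hs : IsSawtooth u a b) (hhi : Tendsto (u ∘ b) atTop (𝓝 hi)) :
    IsBoundedUnder (· ≤ ·) atTop u :=
  let ⟨c, hc⟩ := hhi.isBoundedUnder_le
  isBoundedUnder_of_eventually_le (hs.eventually_le (c := c) hc)

theorem isBoundedUnder_ge (hs : IsSawtooth u a b) (hlo : Tendsto (u ∘ a) atTop (𝓝 lo)) :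
    IsBoundedUnder (· ≥ ·) atTop u :=
  let ⟨c, hc⟩ := hlo.isBoundedUnder_ge
  isBoundedUnder_of_eventually_ge (hs.eventually_ge (c := c) hc)

theorem limsup_eq [DenselyOrdered α] (hs : IsSawtooth u a b)
    (hlo : Tendsto (u ∘ a) atTop (𝓝 lo)) (hhi : Tendsto (u ∘ b) atTop (𝓝 hi)) :
    limsup u atTop = hi := by
  have hcobdd := (hs.isBoundedUnder_ge hlo).isCoboundedUnder_le
  have hbdd := hs.isBoundedUnder_le hhi
  refine le_antisymm ((limsup_le_iff' hcobdd hbdd).2 fun y hy => ?_)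
    ((le_limsup_iff' hcobdd hbdd).2 fun y hy => ?_)
  · exact hs.eventually_le (hhi.eventually (eventually_le_nhds hy))
  · exact hs.tendsto_peak_atTop.frequently (hhi.eventually (eventually_ge_nhds hy)).frequently

theorem liminf_eq [DenselyOrdered α] (hs : IsSawtooth u a b)
    (hlo : Tendsto (u ∘ a) atTop (𝓝 lo)) (hhi : Tendsto (u ∘ b) atTop (𝓝 hi)) :
    liminf u atTop = lo := by
  have hcobdd := (hs.isBoundedUnder_le hhi).isCoboundedUnder_ge
  have hbdd := hs.isBoundedUnder_ge hlo
  refine le_antisymm ((liminf_le_iff' hcobdd hbdd).2 fun y hy => ?_)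
    ((le_liminf_iff' hcobdd hbdd).2 fun y hy => ?_)
  · exact hs.tendsto_atTop.frequently (hlo.eventually (eventually_le_nhds hy)).frequently
  · exact hs.eventually_ge (hlo.eventually (eventually_ge_nhds hy))

end IsSawtooth

namespace Nat

variable {p : ℕ → Prop} [DecidablePred p] {m n : ℕ}

theorem count_eq_count_add_of_forall (hmn : m ≤ n) (hp : ∀ k, m ≤ k → k < n → p k) :
    count p n = count p m + (n - m) := by
  obtain ⟨d, rfl⟩ := Nat.exists_eq_add_of_le hmn
  rw [count_add, count_of_forall (p := fun k => p (m + k)) fun k hk => hp _ (by omega) (by omega)]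
  omega

theorem count_eq_count_of_forall_not (hmn : m ≤ n) (hp : ∀ k, m ≤ k → k < n → ¬p k) :
    count p n = count p m := by
  obtain ⟨d, rfl⟩ := Nat.exists_eq_add_of_le hmn
  rw [count_add, count_iff_forall_not (p := fun k => p (m + k)) |>.2
    fun k hk => hp _ (by omega) (by omega), add_zero]

theorem monotoneOn_count_div {a b : ℕ} (hp : ∀ k, a ≤ k → k < b → p k) :
    MonotoneOn (fun n => (count p n : ℝ) / n) (Set.Icc a b) := by
  intro m hm n hn hmn
  have hcount := count_eq_count_add_of_forall hmn fun k hk hk' =>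
    hp k (hm.1.trans hk) (hk'.trans_le hn.2)
  have hle : (count p m : ℝ) ≤ m := by exact_mod_cast count_le p
  simp only [hcount, Nat.cast_add, Nat.cast_sub hmn]
  rcases m.eq_zero_or_pos with rfl | hm0
  · simp only [Nat.cast_zero, div_zero, sub_zero]; positivity
  · have hmn' : (m : ℝ) ≤ n := by exact_mod_cast hmn
    rw [div_le_div_iff₀ (by exact_mod_cast hm0) (by exact_mod_cast hm0.trans_le hmn)]
    nlinarith

theorem antitoneOn_count_div {a b : ℕ} (hp : ∀ k, a ≤ k → k < b → ¬p k) :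
    AntitoneOn (fun n => (count p n : ℝ) / n) (Set.Icc a b) := by
  intro m hm n hn hmn
  have hcount := count_eq_count_of_forall_not hmn fun k hk hk' =>
    hp k (hm.1.trans hk) (hk'.trans_le hn.2)
  simp only [hcount]
  rcases m.eq_zero_or_pos with rfl | hm0
  · simp
  · exact div_le_div_of_nonneg_left (by positivity) (by exact_mod_cast hm0)
      (by exact_mod_cast hmn)

end Nat

structure IsBlockUnion (p : ℕ → Prop) (a b : ℕ → ℕ) : Prop where
  start_le_end : ∀ i, a i ≤ b i
  end_le_start_succ : ∀ i, b i ≤ a (i + 1)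
  iff_exists_mem_Ico : ∀ k, p k ↔ ∃ i, a i ≤ k ∧ k < b i

namespace IsBlockUnion

variable {p : ℕ → Prop} {a b : ℕ → ℕ}

theorem monotone_start (hB : IsBlockUnion p a b) : Monotone a :=
  monotone_nat_of_le_succ fun i => (hB.start_le_end i).trans (hB.end_le_start_succ i)

theorem monotone_end (hB : IsBlockUnion p a b) : Monotone b :=
  monotone_nat_of_le_succ fun i => (hB.end_le_start_succ i).trans (hB.start_le_end (i + 1))

theorem not_of_lt_start_zero (hB : IsBlockUnion p a b) {k : ℕ} (hk : k < a 0) : ¬p k := by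
  rw [hB.iff_exists_mem_Ico]
  rintro ⟨j, hj, -⟩
  exact hk.not_ge ((hB.monotone_start j.zero_le).trans hj)

theorem not_of_mem_gap (hB : IsBlockUnion p a b) {i k : ℕ} (hk : b i ≤ k)
    (hk' : k < a (i + 1)) : ¬p k := by
  rw [hB.iff_exists_mem_Ico]
  rintro ⟨j, hj, hj'⟩
  rcases le_or_gt j i with hji | hij
  · exact hj'.not_ge ((hB.monotone_end hji).trans hk)
  · exact hk'.not_ge ((hB.monotone_start hij).trans hj)

variable [DecidablePred p]

theorem count_end (hB : IsBlockUnion p a b) (i : ℕ) :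
    Nat.count p (b i) = Nat.count p (a i) + (b i - a i) :=
  Nat.count_eq_count_add_of_forall (hB.start_le_end i) fun k hk hk' =>
    (hB.iff_exists_mem_Ico k).2 ⟨i, hk, hk'⟩

theorem count_start (hB : IsBlockUnion p a b) (m : ℕ) :
    Nat.count p (a m) = ∑ i ∈ Finset.range m, (b i - a i) := by
  induction m with
  | zero =>
    exact Nat.count_iff_forall_not.2 fun k hk => hB.not_of_lt_start_zero hk
  | succ m ih =>
    rw [Finset.sum_range_succ, ← ih, ← hB.count_end,
      Nat.count_eq_count_of_forall_not (hB.end_le_start_succ m) fun k => hB.not_of_mem_gap]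

theorem isSawtooth_count_div (hB : IsBlockUnion p a b) (ha : Tendsto a atTop atTop) :
    IsSawtooth (fun n => (Nat.count p n : ℝ) / n) a b where
  tendsto_atTop := ha
  le_peak := hB.start_le_end
  peak_le := hB.end_le_start_succ
  monotoneOn i :=
    Nat.monotoneOn_count_div fun k hk hk' => (hB.iff_exists_mem_Ico k).2 ⟨i, hk, hk'⟩
  antitoneOn _ := Nat.antitoneOn_count_div fun _ => hB.not_of_mem_gap

end IsBlockUnion

theorem tendsto_div_of_sub_mul_eq {N D : ℕ → ℝ} {L C ρ : ℝ} (hρ : 1 < ρ)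
    (hD : ∀ m, ρ ^ m ≤ D m) (hND : ∀ m, N m - L * D m = m + C) :
    Tendsto (fun m => N m / D m) atTop (𝓝 L) := by
  have hρm : ∀ m, 0 < ρ ^ m := fun m => pow_pos (by linarith) m
  have hDpos : ∀ m, 0 < D m := fun m => (hρm m).trans_le (hD m)
  have hsplit : ∀ m, N m / D m = L + (m + C) / D m := fun m => by
    rw [← hND m]; field_simp [(hDpos m).ne']; ring
  have hbound : Tendsto (fun m : ℕ => (m : ℝ) ^ 1 / ρ ^ m + |C| / ρ ^ m) atTop (𝓝 0) := by
    simpa using (tendsto_pow_const_div_const_pow_of_one_lt 1 hρ).add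
      (tendsto_const_nhds.div_atTop (tendsto_pow_atTop_atTop_of_one_lt hρ))
  have herr : Tendsto (fun m : ℕ => ((m : ℝ) + C) / D m) atTop (𝓝 0) := by
    refine squeeze_zero_norm (fun m => ?_) hbound
    rw [norm_div, Real.norm_of_nonneg (hDpos m).le, pow_one, ← add_div]
    calc ‖(m : ℝ) + C‖ / D m ≤ (m + |C|) / D m := by
          gcongr
          · exact (hDpos m).le
          · simpa using norm_add_le (m : ℝ) C
      _ ≤ (m + |C|) / ρ ^ m := div_le_div_of_nonneg_left (by positivity) (hρm m) (hD m)
  simpa [hsplit] using herr.const_add L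

def InOddBlock (h ℓ : ℕ) : Prop := ∃ k, Odd k ∧ sk h k ≤ ℓ ∧ ℓ ≤ tk h k

noncomputable instance (h : ℕ) : DecidablePred (InOddBlock h) := Classical.decPred _

def oddBlockStart (h m : ℕ) : ℕ := sk h (2 * m + 1)

def oddBlockEnd (h m : ℕ) : ℕ := tk h (2 * m + 1) + 1

theorem oddBlockEnd_eq_oddBlockStart_add (h m : ℕ) :
    oddBlockEnd h m = oddBlockStart h m + ((h + 1) ^ (4 * m + 2) + 1) := by
  rw [oddBlockEnd, oddBlockStart, sk, tk, show 2 * (2 * m + 1) + 1 = (4 * m + 2) + 1 by ring,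
    show 2 * (2 * m + 1) = 4 * m + 2 by ring, pow_succ]
  ring

theorem oddBlockStart_lt_oddBlockEnd (h m : ℕ) : oddBlockStart h m < oddBlockEnd h m := by
  rw [oddBlockEnd_eq_oddBlockStart_add]; omega

-- The common form `((h + 1) ^ 4) ^ m` keeps the identities below within reach of `ring`.
theorem cast_oddBlockStart (h m : ℕ) :
    (oddBlockStart h m : ℝ) = ((h : ℝ) + 1) ^ 2 * (((h : ℝ) + 1) ^ 4) ^ m * h := by
  rw [oddBlockStart, sk, ← pow_mul, ← pow_add]; push_cast; ring_nf

theorem cast_oddBlockEnd (h m : ℕ) :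
    (oddBlockEnd h m : ℝ) = ((h : ℝ) + 1) ^ 3 * (((h : ℝ) + 1) ^ 4) ^ m + 1 := by
  rw [oddBlockEnd, tk, ← pow_mul, ← pow_add]; push_cast; ring_nf

theorem cast_oddBlockEnd_sub_oddBlockStart (h m : ℕ) :
    ((oddBlockEnd h m - oddBlockStart h m : ℕ) : ℝ) =
      ((h : ℝ) + 1) ^ 2 * (((h : ℝ) + 1) ^ 4) ^ m + 1 := by
  rw [oddBlockEnd_eq_oddBlockStart_add, Nat.add_sub_cancel_left, ← pow_mul, ← pow_add]
  push_cast
  ring_nf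

section OddBlocks

variable {h : ℕ}

theorem oddBlockEnd_le_oddBlockStart_succ (hh : 0 < h) (m : ℕ) :
    oddBlockEnd h m ≤ oddBlockStart h (m + 1) := by
  have hx : 1 ≤ (h + 1) ^ (4 * m + 3) := Nat.one_le_pow _ _ (by omega)
  have hq : 8 ≤ (h + 1) ^ 3 * h := by
    calc 8 = 2 ^ 3 * 1 := by norm_num
      _ ≤ (h + 1) ^ 3 * h := by gcongr <;> omega
  have hs : oddBlockStart h (m + 1) = (h + 1) ^ (4 * m + 3) * ((h + 1) ^ 3 * h) := by
    rw [oddBlockStart, sk, ← mul_assoc, ← pow_add]; ring_nf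
  have ht : oddBlockEnd h m = (h + 1) ^ (4 * m + 3) + 1 := by rw [oddBlockEnd, tk]; ring_nf
  rw [hs, ht]
  nlinarith

theorem isBlockUnion_inOddBlock (hh : 0 < h) :
    IsBlockUnion (InOddBlock h) (oddBlockStart h) (oddBlockEnd h) where
  start_le_end m := (oddBlockStart_lt_oddBlockEnd h m).le
  end_le_start_succ := oddBlockEnd_le_oddBlockStart_succ hh
  iff_exists_mem_Ico ℓ := by
    constructor
    · rintro ⟨k, ⟨m, rfl⟩, hs, ht⟩
      exact ⟨m, hs, Nat.lt_succ_of_le ht⟩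
    · rintro ⟨m, hs, ht⟩
      exact ⟨2 * m + 1, odd_two_mul_add_one m, hs, Nat.le_of_lt_succ ht⟩

theorem tendsto_oddBlockStart (hh : 0 < h) : Tendsto (oddBlockStart h) atTop atTop :=
  StrictMono.tendsto_atTop <| strictMono_nat_of_lt_succ fun m =>
    (oddBlockStart_lt_oddBlockEnd h m).trans_le (oddBlockEnd_le_oddBlockStart_succ hh m)

theorem count_oddBlockStart_mul (hh : 0 < h) (m : ℕ) :
    (Nat.count (InOddBlock h) (oddBlockStart h m) : ℝ) * (((h : ℝ) + 1) ^ 4 - 1) =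
      ((h : ℝ) + 1) ^ 2 * ((((h : ℝ) + 1) ^ 4) ^ m - 1) + m * (((h : ℝ) + 1) ^ 4 - 1) := by
  rw [(isBlockUnion_inOddBlock hh).count_start, Nat.cast_sum,
    Finset.sum_congr rfl fun i _ => cast_oddBlockEnd_sub_oddBlockStart h i, Finset.sum_add_distrib,
    ← Finset.mul_sum, add_mul, mul_assoc, geom_sum_mul]
  simp

theorem tendsto_count_div_oddBlockStart (hh : 0 < h) :
    Tendsto (fun m => (Nat.count (InOddBlock h) (oddBlockStart h m) : ℝ) / oddBlockStart h m)
      atTop (𝓝 (1 / ((h : ℝ) * (((h : ℝ) + 1) ^ 4 - 1)))) := by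
  have hh' : (1 : ℝ) ≤ h := by exact_mod_cast hh
  have hq : (1 : ℝ) < (h : ℝ) + 1 := by linarith
  have hq4 : ((h : ℝ) + 1) ^ 4 - 1 ≠ 0 := (sub_pos.2 (one_lt_pow₀ hq (by norm_num))).ne'
  refine tendsto_div_of_sub_mul_eq (C := -(((h : ℝ) + 1) ^ 2 / (((h : ℝ) + 1) ^ 4 - 1))) hq
    (fun m => ?_) (fun m => ?_)
  · rw [cast_oddBlockStart, ← pow_mul, ← pow_add]
    calc ((h : ℝ) + 1) ^ m ≤ ((h : ℝ) + 1) ^ (2 + 4 * m) :=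
          pow_le_pow_right₀ hq.le (by omega)
      _ ≤ ((h : ℝ) + 1) ^ (2 + 4 * m) * h := le_mul_of_one_le_right (by positivity) hh'
  · have hN := count_oddBlockStart_mul hh m
    rw [cast_oddBlockStart]
    field_simp
    linear_combination hN

theorem tendsto_count_div_oddBlockEnd (hh : 0 < h) :
    Tendsto (fun m => (Nat.count (InOddBlock h) (oddBlockEnd h m) : ℝ) / oddBlockEnd h m)
      atTop (𝓝 (((h : ℝ) + 1) ^ 3 / (((h : ℝ) + 1) ^ 4 - 1))) := by
  have hq : (1 : ℝ) < (h : ℝ) + 1 := by simpa using hh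
  have hq4 : ((h : ℝ) + 1) ^ 4 - 1 ≠ 0 := (sub_pos.2 (one_lt_pow₀ hq (by norm_num))).ne'
  refine tendsto_div_of_sub_mul_eq
    (C := 1 - (((h : ℝ) + 1) ^ 2 + ((h : ℝ) + 1) ^ 3) / (((h : ℝ) + 1) ^ 4 - 1)) hq
    (fun m => ?_) (fun m => ?_)
  · rw [cast_oddBlockEnd, ← pow_mul, ← pow_add]
    calc ((h : ℝ) + 1) ^ m ≤ ((h : ℝ) + 1) ^ (3 + 4 * m) :=
          pow_le_pow_right₀ hq.le (by omega)
      _ ≤ ((h : ℝ) + 1) ^ (3 + 4 * m) + 1 := by linarith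
  · have hN := count_oddBlockStart_mul hh m
    rw [(isBlockUnion_inOddBlock hh).count_end, Nat.cast_add, cast_oddBlockEnd_sub_oddBlockStart,
      cast_oddBlockEnd]
    field_simp
    linear_combination hN

end OddBlocks

/-- Fix `h ≥ 2` and let
`B = {ℓ : s_k ≤ ℓ ≤ t_k for some odd k}`.  Then
`limsup_n |B ∩ [0,n)|/n = (h+1)³/((h+1)⁴ − 1)` and
`liminf_n |B ∩ [0,n)|/n = 1/(h((h+1)⁴ − 1))`. -/
theorem density_of_odd_intervals (h : ℕ) (hh : 2 ≤ h) :
    Filter.limsup (fun n : ℕ =>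
        (Nat.card {ℓ : ℕ // ℓ < n ∧ ∃ k, Odd k ∧ sk h k ≤ ℓ ∧ ℓ ≤ tk h k} : ℝ) / n)
        Filter.atTop = ((h : ℝ) + 1) ^ 3 / (((h : ℝ) + 1) ^ 4 - 1) ∧
    Filter.liminf (fun n : ℕ =>
        (Nat.card {ℓ : ℕ // ℓ < n ∧ ∃ k, Odd k ∧ sk h k ≤ ℓ ∧ ℓ ≤ tk h k} : ℝ) / n)
        Filter.atTop = 1 / ((h : ℝ) * (((h : ℝ) + 1) ^ 4 - 1)) := by
  have hpos : 0 < h := by omega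
  have hcard : ∀ n, Nat.card {ℓ : ℕ // ℓ < n ∧ ∃ k, Odd k ∧ sk h k ≤ ℓ ∧ ℓ ≤ tk h k} =
      Nat.count (InOddBlock h) n := fun n =>
    ((Nat.count_eq_card_fintype (InOddBlock h) n).trans Fintype.card_eq_nat_card).symm
  have hs := (isBlockUnion_inOddBlock hpos).isSawtooth_count_div (tendsto_oddBlockStart hpos)
  simp only [hcard]
  have hstart := tendsto_count_div_oddBlockStart hpos
  have hend := tendsto_count_div_oddBlockEnd hpos
  exact ⟨hs.limsup_eq hstart hend, hs.liminf_eq hstart hend⟩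
end

section
/- Let h ≥ 1 and d ≥ 1 be integers, let p_k denote the k-th prime, and let ν(k) denote the multiplicity of p_{h+1} in the positive integer k. For integers 1 ≤ m ≤ n and i ∈ {1,…,h}, define V_i(m,n) = {(p_i/p_{h+1})^(ν(k)) · k : k ∈ ℕ, m ≤ k ≤ n, ν(k) ≤ d} (a set of natural numbers) and its closure V̄_i(m,n) = {ℓ · p_{h+1}^(a₁+⋯+a_h) / (p₁^(a₁)⋯p_h^(a_h)) : ℓ ∈ V_i(m,n), a₁,…,a_h ∈ ℕ} ⊆ ℚ. Then there is a rational γ ∈ (1/2,1), depending only on h and d, and an N ∈ ℕ such that for every adaptive h-head finite-state gambler G over {0,1}, every input sequence Y ∈ {0,1}^ω, every integer n ≥ N, and every integer m with γ·n ≤ m ≤ n, there exists j ∈ {1,…,h} such that U(m,n) ∩ V̄_j(m,n) = ∅, where U(m,n) = [0,m−1] ∩ ⋃_{i=1}^{h−1} [π_i(m−1), π_i(m−1)+n−m+1] and π_i denotes the position of trailing head i of G on input Y. -/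
/-!
Adaptive multi-head finite-state gamblers, their martingales and `s`-gales,
and the adaptive/oblivious multi-head finite-state (strong) predimensions.
-/

/-- An adaptive `h`-head finite-state gambler over the alphabet `A`.
Heads are indexed by `Fin h`; head `h-1` (the last one) is the leading head,
and heads `0, …, h-2` are the trailing heads (numbered `1, …, h-1` in the paper). -/
structure AFSG (A : Type) [Fintype A] (h : ℕ) where
  /-- the finite, nonempty state space -/
  Q : Type
  [fintypeQ : Fintype Q]
  [nonemptyQ : Nonempty Q]
  /-- the transition function -/
  δ : Q → (Fin h → A) → Q × (Fin (h - 1) → Bool)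
  /-- the betting function: a rational-valued probability distribution on `A`
  for each state -/
  β : Q → A → ℚ
  β_nonneg : ∀ q a, 0 ≤ β q a
  β_sum : ∀ q, ∑ a, β q a = 1
  /-- the initial state -/
  q₀ : Q
  /-- the initial capital -/
  c₀ : ℝ
  c₀_nonneg : 0 ≤ c₀

namespace AFSG

variable {A : Type} [Fintype A] {h : ℕ}

/-- One step of the gambler's run on input sequence `S`: from a configuration
(current state, head positions), all heads read their symbols, the state is
updated, the leading head moves right, and trailing head `i` moves right iff
bit `i` of the second component of `δ` is `1`. -/
def step (G : AFSG A h) (S : ℕ → A) (c : G.Q × (Fin h → ℕ)) : G.Q × (Fin h → ℕ) :=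
  let r := G.δ c.1 (fun i => S (c.2 i))
  (r.1, fun i =>
    if hi : (i : ℕ) < h - 1 then c.2 i + (if r.2 ⟨i, hi⟩ then 1 else 0)
    else c.2 i + 1)

/-- The configuration after `n` steps; all heads start at position `0`. -/
def conf (G : AFSG A h) (S : ℕ → A) (n : ℕ) : G.Q × (Fin h → ℕ) :=
  (G.step S)^[n] (G.q₀, fun _ => 0)

/-- The state `q_n` after `n` steps. -/
def stateAt (G : AFSG A h) (S : ℕ → A) (n : ℕ) : G.Q := (G.conf S n).1

/-- The position `π_i(n)` of head `i` after `n` steps. -/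
def headPos (G : AFSG A h) (S : ℕ → A) (i : Fin h) (n : ℕ) : ℕ := (G.conf S n).2 i

/-- The martingale of `G` evaluated on the prefix `S[0..n-1]`:
`d_G(λ) = c₀` and `d_G(wb) = |Σ| ⬝ d_G(w) ⬝ β(q_{|w|})(b)`. -/
def capital (G : AFSG A h) (S : ℕ → A) : ℕ → ℝ
  | 0 => G.c₀
  | n + 1 => (Fintype.card A : ℝ) * G.capital S n * (G.β (G.stateAt S n) (S n) : ℝ)

/-- The `s`-gale of `G` evaluated on the prefix `S[0..n-1]`:
`d_G^{(s)}(w) = |Σ|^{(s-1)|w|} ⬝ d_G(w)`. -/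
noncomputable def gale (G : AFSG A h) (s : ℝ) (S : ℕ → A) (n : ℕ) : ℝ :=
  (Fintype.card A : ℝ) ^ ((s - 1) * (n : ℝ)) * G.capital S n

/-- `G` is an oblivious `h`-head finite-state gambler: the state space factors
as `P × T`, the `T`-component evolves independently of the input, and the head
movements depend only on the `T`-component. -/
def Oblivious (G : AFSG A h) : Prop :=
  ∃ (P T : Type) (e : G.Q ≃ P × T) (δP : P → (Fin h → A) → P) (δT : T → T)
    (μ : T → Fin (h - 1) → Bool),
    ∀ q b, G.δ q b = (e.symm (δP (e q).1 b, δT (e q).2), μ (e q).2)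

end AFSG

/-- An `s`-gale (given by its values on the prefixes of a fixed sequence)
succeeds if its limsup is `∞`. -/
def SucceedsOn (f : ℕ → ℝ) : Prop :=
  Filter.limsup (fun n => (f n : EReal)) Filter.atTop = ⊤

/-- Strong success: the liminf is `∞`. -/
def SucceedsStronglyOn (f : ℕ → ℝ) : Prop :=
  Filter.liminf (fun n => (f n : EReal)) Filter.atTop = ⊤

/-- The adaptive `h`-head finite-state predimension `adim_FS^(h)(S)`. -/
noncomputable def adimFS (A : Type) [Fintype A] (h : ℕ) (S : ℕ → A) : ℝ :=
  sInf {s : ℝ | 0 ≤ s ∧ ∃ G : AFSG A h, SucceedsOn (G.gale s S)}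

/-- The adaptive `h`-head finite-state strong predimension `aDim_FS^(h)(S)`. -/
noncomputable def aDimFS (A : Type) [Fintype A] (h : ℕ) (S : ℕ → A) : ℝ :=
  sInf {s : ℝ | 0 ≤ s ∧ ∃ G : AFSG A h, SucceedsStronglyOn (G.gale s S)}

/-- The oblivious `h`-head finite-state predimension `odim_FS^(h)(S)`. -/
noncomputable def odimFS (A : Type) [Fintype A] (h : ℕ) (S : ℕ → A) : ℝ :=
  sInf {s : ℝ | 0 ≤ s ∧ ∃ G : AFSG A h, G.Oblivious ∧ SucceedsOn (G.gale s S)}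

/-- The oblivious `h`-head finite-state strong predimension `oDim_FS^(h)(S)`. -/
noncomputable def oDimFS (A : Type) [Fintype A] (h : ℕ) (S : ℕ → A) : ℝ :=
  sInf {s : ℝ | 0 ≤ s ∧ ∃ G : AFSG A h, G.Oblivious ∧ SucceedsStronglyOn (G.gale s S)}

/-- `nthPrime k` is the `k`-th prime number (1-indexed): `nthPrime 1 = 2`. -/
noncomputable def nthPrime (k : ℕ) : ℕ := Nat.nth Nat.Prime (k - 1)

/-- `ν(k)`: the multiplicity of `p_{h+1}` in `k`. -/
noncomputable def nuP (h k : ℕ) : ℕ := k.factorization (nthPrime (h + 1))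

/-- `V_i(m,n) = {(p_i/p_{h+1})^(ν k) · k : m ≤ k ≤ n, ν(k) ≤ d}` (a set of
natural numbers; since `p_{h+1}^(ν k)` divides `k`, the division is exact). -/
noncomputable def Vset (h d m n i : ℕ) : Set ℕ :=
  {v | ∃ k, m ≤ k ∧ k ≤ n ∧ nuP h k ≤ d ∧
    v = nthPrime i ^ nuP h k * (k / nthPrime (h + 1) ^ nuP h k)}

/-- The closure `V̄_i(m,n) ⊆ ℚ`:
`{ℓ · p_{h+1}^(a₁+⋯+a_h) / (p₁^(a₁)⋯p_h^(a_h)) : ℓ ∈ V_i(m,n), a ∈ ℕ^h}`. -/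
noncomputable def VbarSet (h d m n i : ℕ) : Set ℚ :=
  {x | ∃ ℓ ∈ Vset h d m n i, ∃ a : Fin h → ℕ,
    x = (ℓ : ℚ) * (nthPrime (h + 1) : ℚ) ^ (∑ j, a j) /
      ∏ j : Fin h, (nthPrime ((j : ℕ) + 1) : ℚ) ^ a j}

/-- `U(m,n) = [0,m−1] ∩ ⋃_{i=1}^{h−1} [π_i(m−1), π_i(m−1)+n−m+1]`, where `π_i`
is the position of trailing head `i` of the gambler `G` on input `Y`
(trailing heads are the heads of index `< h−1` in our indexing). -/
def Uset {h : ℕ} (G : AFSG (ZMod 2) h) (Y : ℕ → ZMod 2) (m n : ℕ) : Set ℕ :=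
  {u | u < m ∧ ∃ i : Fin (h - 1),
    G.headPos Y (Fin.castLE (Nat.sub_le h 1) i) (m - 1) ≤ u ∧
    u ≤ G.headPos Y (Fin.castLE (Nat.sub_le h 1) i) (m - 1) + (n - m + 1)}


/-!
Write `q = p_{h+1}`. A point `u < m` of `V̄_j(m,n)` has the form
`u = k · p_j^ν q^(A - ν) / ∏ p_i^(a_i)` with `m ≤ k ≤ n`, `ν ≤ d` and `A = ∑ a_i`. Since `u < k` and
every `p_i < q`, the exponent sum `A` is bounded in terms of `q` and `d`, so the multiplier
`u / k` is a fraction with bounded numerator and denominator, and `u ≥ m / q^d`.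
The `h` branches share the `h - 1` trailing heads, so two distinct branches `j₁ ≠ j₂` are hit
by points `u₁, u₂` at distance at most `n - m + 1` from each other. For `m` close to `n` the
multipliers `u₁ / k₁` and `u₂ / k₂` are then too close to be distinct bounded fractions, and
comparing `p_{j₁}`-adic valuations of the equal multipliers forces `a_{j₁} ≥ ν₁`, whence
`u₁ ≥ k₁ ≥ m`.
-/

open Finset

lemma pow_mul_add_le_succ_pow_mul (a n : ℕ) : a ^ n * (a + n) ≤ (a + 1) ^ n * a := by
  induction n with
  | zero => simp
  | succ n ih =>
    have hpow : a ^ (n + 1) ≤ (a + 1) ^ n * a := by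
      rw [pow_succ]; gcongr; omega
    calc a ^ (n + 1) * (a + (n + 1)) = a * (a ^ n * (a + n)) + a ^ (n + 1) := by ring
      _ ≤ a * ((a + 1) ^ n * a) + (a + 1) ^ n * a := by gcongr
      _ = (a + 1) ^ (n + 1) * a := by ring

lemma lt_pow_succ_of_pow_lt_mul_pow {q A d : ℕ} (hq : 2 ≤ q) (h : q ^ A < (q - 1) ^ A * q ^ d) :
    A < q ^ (d + 1) := by
  have hbern := pow_mul_add_le_succ_pow_mul (q - 1) A
  rw [Nat.sub_add_cancel (by omega)] at hbern
  have hlt : (q - 1) ^ A * (q - 1 + A) < (q - 1) ^ A * (q ^ d * (q - 1)) :=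
    calc _ ≤ q ^ A * (q - 1) := hbern
      _ < (q - 1) ^ A * q ^ d * (q - 1) := Nat.mul_lt_mul_of_pos_right h (by omega)
      _ = _ := by ring
  have hmono : q ^ d * (q - 1) ≤ q ^ d * q := by gcongr; omega
  rw [pow_succ]
  have := lt_of_mul_lt_mul_left' hlt
  omega

section ProdPow

variable {ι : Type*} [Fintype ι] {p a : ι → ℕ} {q : ℕ}

lemma prod_pow_le_pow_sum (hp : ∀ i, p i ≤ q) : ∏ i, p i ^ a i ≤ q ^ ∑ i, a i := by
  rw [← prod_pow_eq_pow_sum]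
  exact prod_le_prod' fun i _ => Nat.pow_le_pow_left (hp i) _

lemma prod_pow_mul_pow_le (hp : ∀ i, p i ≤ q) {j : ι} {e : ℕ} (he : e ≤ a j) :
    (∏ i, p i ^ a i) * q ^ e ≤ p j ^ e * q ^ ∑ i, a i := by
  classical
  rw [← mul_prod_erase univ _ (mem_univ j), ← add_sum_erase univ _ (mem_univ j)]
  have hrest := prod_le_prod' fun i (_ : i ∈ univ.erase j) => Nat.pow_le_pow_left (hp i) (a i)
  rw [prod_pow_eq_pow_sum] at hrest
  calc p j ^ a j * (∏ i ∈ univ.erase j, p i ^ a i) * q ^ e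
      = p j ^ e * (p j ^ (a j - e) * q ^ e) * ∏ i ∈ univ.erase j, p i ^ a i := by
        rw [← mul_assoc, ← pow_add, Nat.add_sub_cancel' he]; ring
    _ ≤ p j ^ e * (q ^ (a j - e) * q ^ e) * q ^ ∑ i ∈ univ.erase j, a i := by
        gcongr; exact hp j
    _ = p j ^ e * q ^ (a j + ∑ i ∈ univ.erase j, a i) := by
        rw [← pow_add, Nat.sub_add_cancel he, pow_add]; ring

lemma factorization_prod_pow_apply (hp : ∀ i, (p i).Prime) (hinj : Function.Injective p)
    (a : ι → ℕ) (j : ι) : (∏ i, p i ^ a i).factorization (p j) = a j := by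
  classical
  rw [Nat.factorization_prod fun i _ => pow_ne_zero _ (hp i).ne_zero, Finsupp.finsetSum_apply]
  simp [(hp _).factorization_pow, Finsupp.single_apply, hinj.eq_iff]

lemma exponent_eq_of_mul_eq (hp : ∀ i, (p i).Prime) (hinj : Function.Injective p) (hq : q.Prime)
    (hpq : ∀ i, p i ≠ q) {j₁ j₂ : ι} (hj : j₁ ≠ j₂) {ν₁ ν₂ A₁ A₂ : ℕ} {a₁ a₂ : ι → ℕ}
    (h : p j₂ ^ ν₂ * q ^ A₂ * ((∏ i, p i ^ a₁ i) * q ^ ν₁) =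
      p j₁ ^ ν₁ * q ^ A₁ * ((∏ i, p i ^ a₂ i) * q ^ ν₂)) :
    a₁ j₁ = ν₁ + a₂ j₁ := by
  have hprod : ∀ a : ι → ℕ, ∏ i, p i ^ a i ≠ 0 :=
    fun a => prod_ne_zero_iff.2 fun i _ => pow_ne_zero _ (hp i).ne_zero
  have := congrArg (fun x => x.factorization (p j₁)) h
  simp [Nat.factorization_mul, hprod, (hp _).ne_zero, hq.ne_zero, (hp _).factorization_pow,
    hq.factorization_pow, factorization_prod_pow_apply hp hinj, hinj.eq_iff, hj.symm,
    (hpq j₁).symm] at this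
  omega

end ProdPow

section Representation

/- `hrep` below is `u = k · p_j^ν q^(A - ν) / ∏ p_i^(a_i)`, with `A = ∑ a_i`, cleared of
denominators. -/
variable {ι : Type*} [Fintype ι] {p a : ι → ℕ} {q d m k u ν : ℕ} {j : ι}

lemma mul_pow_sum_le_of_eq (hp : ∀ i, 0 < p i) (hq : 0 < q) (hk : m ≤ k) (hν : ν ≤ d)
    (hrep : u * ((∏ i, p i ^ a i) * q ^ ν) = k * (p j ^ ν * q ^ ∑ i, a i)) :
    m * q ^ ∑ i, a i ≤ u * ((∏ i, p i ^ a i) * q ^ d) :=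
  calc m * q ^ ∑ i, a i ≤ k * (p j ^ ν * q ^ ∑ i, a i) :=
        Nat.mul_le_mul hk (Nat.le_mul_of_pos_left _ (pow_pos (hp j) _))
    _ = u * ((∏ i, p i ^ a i) * q ^ ν) := hrep.symm
    _ ≤ u * ((∏ i, p i ^ a i) * q ^ d) := by gcongr

lemma le_mul_pow_of_eq (hp : ∀ i, 0 < p i) (hpq : ∀ i, p i ≤ q) (hq : 0 < q) (hk : m ≤ k)
    (hν : ν ≤ d) (hrep : u * ((∏ i, p i ^ a i) * q ^ ν) = k * (p j ^ ν * q ^ ∑ i, a i)) :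
    m ≤ u * q ^ d := by
  have h := (mul_pow_sum_le_of_eq hp hq hk hν hrep).trans
    (Nat.mul_le_mul_left u (Nat.mul_le_mul_right _ (prod_pow_le_pow_sum hpq)))
  rw [← mul_assoc, mul_right_comm] at h
  exact Nat.le_of_mul_le_mul_right h (pow_pos hq _)

lemma sum_lt_of_eq (hp : ∀ i, 0 < p i) (hpq : ∀ i, p i < q) (hq : 2 ≤ q) (hu : u < m)
    (hk : m ≤ k) (hν : ν ≤ d)
    (hrep : u * ((∏ i, p i ^ a i) * q ^ ν) = k * (p j ^ ν * q ^ ∑ i, a i)) :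
    ∑ i, a i < q ^ (d + 1) := by
  refine lt_pow_succ_of_pow_lt_mul_pow hq (lt_of_not_ge fun hle => ?_)
  have h := (mul_pow_sum_le_of_eq hp (by omega) hk hν hrep).trans
    (Nat.mul_le_mul_left u (Nat.mul_le_mul_right _
      (prod_pow_le_pow_sum (q := q - 1) fun i => Nat.le_sub_one_of_lt (hpq i))))
  have := h.trans (Nat.mul_le_mul_left u hle)
  exact absurd (Nat.le_of_mul_le_mul_right this (pow_pos (by omega) _)) (by omega)

lemma le_of_eq_of_le_exponent (hpq : ∀ i, p i ≤ q) (hpj : 0 < p j) (hq : 0 < q)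
    (he : ν ≤ a j) (hrep : u * ((∏ i, p i ^ a i) * q ^ ν) = k * (p j ^ ν * q ^ ∑ i, a i)) :
    k ≤ u := by
  refine Nat.le_of_mul_le_mul_right (c := p j ^ ν * q ^ ∑ i, a i) ?_ (by positivity)
  rw [← hrep]
  exact Nat.mul_le_mul_left u (prod_pow_mul_pow_le hpq he)

lemma pow_mul_pow_sum_le (hpq : ∀ i, p i ≤ q) (hq : 0 < q) {B : ℕ} (hν : ν ≤ d)
    (hA : ∑ i, a i ≤ B) : p j ^ ν * q ^ ∑ i, a i ≤ q ^ (d + B) :=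
  calc p j ^ ν * q ^ ∑ i, a i ≤ q ^ ν * q ^ ∑ i, a i := by gcongr; exact hpq j
    _ ≤ q ^ (d + B) := by rw [← pow_add]; exact Nat.pow_le_pow_right hq (by omega)

lemma prod_pow_mul_pow_le_pow (hpq : ∀ i, p i ≤ q) (hq : 0 < q) {B : ℕ} (hν : ν ≤ d)
    (hA : ∑ i, a i ≤ B) : (∏ i, p i ^ a i) * q ^ ν ≤ q ^ (d + B) :=
  calc (∏ i, p i ^ a i) * q ^ ν ≤ q ^ (∑ i, a i) * q ^ ν := by
        gcongr; exact prod_pow_le_pow_sum hpq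
    _ ≤ q ^ (d + B) := by rw [← pow_add]; exact Nat.pow_le_pow_right hq (by omega)

end Representation

lemma mul_window_lt_sq {T u m n : ℕ} (hT : 0 < T) (hu : u ≤ n) (hmn : m ≤ n)
    (hn : 100 * T ≤ n) (hgap : 100 * T * (n - m) ≤ n) :
    T * (u * (n - m) + (n - m + 1) * n) < m * m := by
  have hnm : (0 : ℤ) ≤ n - m := by rw [sub_nonneg]; exact_mod_cast hmn
  zify [hmn] at *
  have hm_large : 99 * (n : ℤ) ≤ 100 * m := by
    nlinarith [mul_le_mul_of_nonneg_right (show (1 : ℤ) ≤ T by omega) hnm]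
  nlinarith [mul_le_mul_of_nonneg_right hgap (Nat.cast_nonneg (α := ℤ) u),
    mul_le_mul_of_nonneg_right hgap (Nat.cast_nonneg (α := ℤ) n),
    mul_le_mul_of_nonneg_right hn (Nat.cast_nonneg (α := ℤ) n),
    mul_le_mul_of_nonneg_left hu (Nat.cast_nonneg (α := ℤ) n),
    mul_le_mul hm_large hm_large (by positivity) (by positivity)]

lemma cross_mul_eq {u₁ u₂ k₁ k₂ E₁ E₂ N₁ N₂ : ℕ} (h₁ : u₁ * E₁ = k₁ * N₁)
    (h₂ : u₂ * E₂ = k₂ * N₂) : N₂ * E₁ * (u₁ * k₂) = N₁ * E₂ * (u₂ * k₁) :=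
  calc N₂ * E₁ * (u₁ * k₂) = N₂ * k₂ * (u₁ * E₁) := by ring
    _ = N₁ * k₁ * (u₂ * E₂) := by rw [h₁, h₂]; ring
    _ = N₁ * E₂ * (u₂ * k₁) := by ring

/- `X < Y` would make the ratio `u₁ k₂ / (u₂ k₁) = Y / X` at least `1 + 1 / M`, whereas
`u₁ ≤ u₂ + (n - m + 1)`, `m ≤ k₁`, `k₂ ≤ n` and `u₂ ≥ m / Qd` keep it below that bound once
`n - m` is small compared with `n`. -/
lemma not_lt_of_mul_eq_mul {X Y M Qd u₁ u₂ k₁ k₂ m n : ℕ}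
    (hXY : X * (u₁ * k₂) = Y * (u₂ * k₁)) (hXM : X ≤ M)
    (hu₂ : u₂ < m) (hmu₂ : m ≤ u₂ * Qd) (hk₁ : m ≤ k₁) (hk₂ : k₂ ≤ n)
    (hu₁ : u₁ ≤ u₂ + (n - m + 1)) (hmn : m ≤ n)
    (hn : 100 * (M * Qd) ≤ n) (hgap : 100 * (M * Qd) * (n - m) ≤ n) : ¬ X < Y := by
  intro hlt
  have hu₂k₁ : 0 < u₂ * k₁ :=
    Nat.mul_pos (Nat.pos_of_ne_zero (by rintro rfl; simp at hmu₂; omega)) (by omega)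
  have hX : 0 < X := by
    refine Nat.pos_of_ne_zero fun hX0 => ?_
    rw [hX0, zero_mul, eq_comm, mul_eq_zero] at hXY
    omega
  have hT : 0 < M * Qd :=
    Nat.mul_pos (by omega) (Nat.pos_of_ne_zero (by rintro rfl; simp at hmu₂; omega))
  have hm_sq : m * m ≤ Qd * (u₂ * k₁) :=
    calc m * m ≤ u₂ * Qd * k₁ := Nat.mul_le_mul hmu₂ hk₁
      _ = Qd * (u₂ * k₁) := by ring
  have hwindow := mul_window_lt_sq hT (by omega : u₂ ≤ n) hmn hn hgap
  zify [hmn] at *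
  set D : ℤ := u₁ * k₂ - u₂ * k₁
  have hXD : (u₂ : ℤ) * k₁ ≤ X * D :=
    calc (u₂ : ℤ) * k₁ ≤ (Y - X) * (u₂ * k₁) := le_mul_of_one_le_left hu₂k₁.le (by linarith)
      _ = X * D := by linear_combination -hXY
  have hD : 0 ≤ D := (pos_of_mul_pos_right (hu₂k₁.trans_le hXD) hX.le).le
  have hD_le : D ≤ u₂ * (n - m) + (n - m + 1) * n := by
    have : (u₁ : ℤ) * k₂ ≤ (u₂ + (n - m + 1)) * n :=
      mul_le_mul hu₁ hk₂ (by positivity) (by linarith)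
    nlinarith [mul_le_mul_of_nonneg_left hk₁ (Nat.cast_nonneg (α := ℤ) u₂)]
  have : (m : ℤ) * m ≤ M * Qd * (u₂ * (n - m) + (n - m + 1) * n) :=
    calc (m : ℤ) * m ≤ Qd * (u₂ * k₁) := hm_sq
      _ ≤ Qd * (M * D) := mul_le_mul_of_nonneg_left
          (hXD.trans (mul_le_mul_of_nonneg_right hXM hD)) (by positivity)
      _ ≤ M * Qd * (u₂ * (n - m) + (n - m + 1) * n) := by
          rw [← mul_assoc, mul_comm (Qd : ℤ)]; gcongr
  linarith

lemma nthPrime_prime (k : ℕ) : (nthPrime k).Prime := Nat.prime_nth_prime _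

lemma nthPrime_succ_injective : Function.Injective fun i : ℕ => nthPrime (i + 1) :=
  (Nat.nth_strictMono Nat.infinite_setOfPred_prime).injective

lemma nthPrime_succ_lt {i j : ℕ} (hij : i < j) : nthPrime (i + 1) < nthPrime (j + 1) :=
  Nat.nth_strictMono Nat.infinite_setOfPred_prime hij

lemma exists_eq_of_mem_VbarSet {h d m n j u : ℕ} (hu : (u : ℚ) ∈ VbarSet h d m n j) :
    ∃ k ν, ∃ a : Fin h → ℕ, m ≤ k ∧ k ≤ n ∧ ν ≤ d ∧
      u * ((∏ i : Fin h, nthPrime (i + 1) ^ a i) * nthPrime (h + 1) ^ ν) =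
        k * (nthPrime j ^ ν * nthPrime (h + 1) ^ ∑ i, a i) := by
  obtain ⟨ℓ, ⟨k, hmk, hkn, hν, rfl⟩, a, hx⟩ := hu
  refine ⟨k, nuP h k, a, hmk, hkn, hν, ?_⟩
  have hdvd : nthPrime (h + 1) ^ nuP h k ∣ k := Nat.ordProj_dvd k _
  generalize nuP h k = ν at hdvd hx ⊢
  obtain ⟨c, rfl⟩ := hdvd
  have hD : (∏ i : Fin h, (nthPrime (i + 1) : ℚ) ^ a i) ≠ 0 :=
    prod_ne_zero_iff.2 fun i _ => pow_ne_zero _ (by exact_mod_cast (nthPrime_prime _).ne_zero)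
  rw [Nat.mul_div_cancel_left _ (pow_pos (nthPrime_prime _).pos _)] at hx
  qify
  rw [hx]
  field_simp
  push_cast
  ring

/-- `q^(2(d + q^(d+1)))` bounds the cross products of numerators and denominators of two
multipliers `u / k` (`q^(d+1)` bounds their exponent sums), and `q^d` bounds `m / u`. -/
noncomputable def windowConst (h d : ℕ) : ℕ :=
  nthPrime (h + 1) ^ (2 * (d + nthPrime (h + 1) ^ (d + 1))) * nthPrime (h + 1) ^ d

lemma windowConst_pos (h d : ℕ) : 0 < windowConst h d :=
  Nat.mul_pos (pow_pos (nthPrime_prime _).pos _) (pow_pos (nthPrime_prime _).pos _)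

lemma false_of_close_mem_VbarSet {h d m n u₁ u₂ : ℕ} {j₁ j₂ : Fin h} (hj : j₁ ≠ j₂)
    (hu₁ : u₁ < m) (hu₂ : u₂ < m) (h₁₂ : u₁ ≤ u₂ + (n - m + 1)) (h₂₁ : u₂ ≤ u₁ + (n - m + 1))
    (hmn : m ≤ n) (hn : 100 * windowConst h d ≤ n) (hgap : 100 * windowConst h d * (n - m) ≤ n)
    (hv₁ : (u₁ : ℚ) ∈ VbarSet h d m n (j₁ + 1)) (hv₂ : (u₂ : ℚ) ∈ VbarSet h d m n (j₂ + 1)) :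
    False := by
  set q := nthPrime (h + 1)
  set p : Fin h → ℕ := fun i => nthPrime (i + 1)
  have hq : 2 ≤ q := (nthPrime_prime _).two_le
  have hp : ∀ i, 0 < p i := fun i => (nthPrime_prime _).pos
  have hpq : ∀ i, p i < q := fun i => nthPrime_succ_lt i.2
  obtain ⟨k₁, ν₁, a₁, hmk₁, hk₁n, hν₁, hrep₁⟩ := exists_eq_of_mem_VbarSet hv₁
  obtain ⟨k₂, ν₂, a₂, hmk₂, hk₂n, hν₂, hrep₂⟩ := exists_eq_of_mem_VbarSet hv₂
  have hA₁ := sum_lt_of_eq hp hpq hq hu₁ hmk₁ hν₁ hrep₁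
  have hA₂ := sum_lt_of_eq hp hpq hq hu₂ hmk₂ hν₂ hrep₂
  have hpq' : ∀ i, p i ≤ q := fun i => (hpq i).le
  set N₁ := p j₁ ^ ν₁ * q ^ ∑ i, a₁ i
  set N₂ := p j₂ ^ ν₂ * q ^ ∑ i, a₂ i
  set E₁ := (∏ i, p i ^ a₁ i) * q ^ ν₁
  set E₂ := (∏ i, p i ^ a₂ i) * q ^ ν₂
  have hX : N₂ * E₁ ≤ q ^ (2 * (d + q ^ (d + 1))) := by
    rw [two_mul, pow_add]
    exact Nat.mul_le_mul (pow_mul_pow_sum_le hpq' (by omega) hν₂ hA₂.le)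
      (prod_pow_mul_pow_le_pow hpq' (by omega) hν₁ hA₁.le)
  have hY : N₁ * E₂ ≤ q ^ (2 * (d + q ^ (d + 1))) := by
    rw [two_mul, pow_add]
    exact Nat.mul_le_mul (pow_mul_pow_sum_le hpq' (by omega) hν₁ hA₁.le)
      (prod_pow_mul_pow_le_pow hpq' (by omega) hν₂ hA₂.le)
  have hcross := cross_mul_eq hrep₁ hrep₂
  have hm₁ := le_mul_pow_of_eq hp hpq' (by omega) hmk₁ hν₁ hrep₁
  have hm₂ := le_mul_pow_of_eq hp hpq' (by omega) hmk₂ hν₂ hrep₂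
  rcases lt_trichotomy (N₂ * E₁) (N₁ * E₂) with hlt | heq | hgt
  · exact not_lt_of_mul_eq_mul hcross hX hu₂ hm₂ hmk₁ hk₂n h₁₂ hmn hn hgap hlt
  · have he := exponent_eq_of_mul_eq (fun i => nthPrime_prime _)
      (nthPrime_succ_injective.comp Fin.val_injective) (nthPrime_prime _) (fun i => (hpq i).ne)
      hj heq
    have := le_of_eq_of_le_exponent hpq' (hp j₁) (by omega) (by omega) hrep₁
    omega
  · exact not_lt_of_mul_eq_mul hcross.symm hY hu₁ hm₁ hmk₂ hk₁n h₂₁ hmn hn hgap hgt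

lemma mul_sub_le_of_one_sub_inv_mul_le {T n m : ℕ} (hT : 0 < T) (hmn : m ≤ n)
    (h : (1 - 1 / T : ℚ) * n ≤ m) : T * (n - m) ≤ n := by
  have hT' : (0 : ℚ) < T := by exact_mod_cast hT
  qify [hmn]
  rw [sub_mul, one_div, inv_mul_eq_div, sub_le_iff_le_add, ← sub_le_iff_le_add',
    le_div_iff₀ hT'] at h
  linarith

theorem exists_unvisited_branch_general (h d : ℕ) (hh : 1 ≤ h) :
    ∃ γ : ℚ, 1 / 2 < γ ∧ γ < 1 ∧ ∃ N : ℕ,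
      ∀ (G : AFSG (ZMod 2) h) (Y : ℕ → ZMod 2) (n m : ℕ),
        N ≤ n → γ * (n : ℚ) ≤ (m : ℚ) → m ≤ n →
        ∃ j, 1 ≤ j ∧ j ≤ h ∧
          ∀ u ∈ Uset G Y m n, ((u : ℚ) ∉ VbarSet h d m n j) := by
  have hT := windowConst_pos h d
  have hTq : (1 : ℚ) ≤ windowConst h d := by exact_mod_cast hT
  refine ⟨1 - 1 / (100 * windowConst h d : ℕ), ?_, ?_, 100 * windowConst h d, ?_⟩
  · have : 1 / (100 * windowConst h d : ℚ) ≤ 1 / 100 := by gcongr; linarith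
    push_cast
    linarith
  · push_cast
    simp only [sub_lt_self_iff, one_div, inv_pos]
    positivity
  intro G Y n m hn hγ hmn
  have hgap := mul_sub_le_of_one_sub_inv_mul_le (by omega) hmn hγ
  by_contra! hhit
  choose u hu hv using fun j : Fin h => hhit (j + 1) (by omega) (by omega)
  choose hum i hlo hhi using hu
  have hclose : ∀ j j', i j = i j' → u j ≤ u j' + (n - m + 1) := fun j j' hjj' => by
    have := hhi j
    have := hlo j'
    rw [hjj'] at *
    omega
  obtain ⟨j₁, j₂, hj, hi⟩ := Fintype.exists_ne_map_eq_of_card_lt i (by simp; omega)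
  exact false_of_close_mem_VbarSet hj (hum j₁) (hum j₂) (hclose _ _ hi) (hclose _ _ hi.symm)
    hmn hn hgap (hv j₁) (hv j₂)

/-- For `h ≥ 1` and `d ≥ 1` there are a rational
`γ ∈ (1/2, 1)` and an `N ∈ ℕ`, depending only on `h` and `d`, such that for
every adaptive `h`-head finite-state gambler `G` over `{0,1}`, every input
`Y ∈ {0,1}^ω`, every `n ≥ N`, and every `m` with `γ·n ≤ m ≤ n`, there is some
`j ∈ {1,…,h}` with `U(m,n) ∩ V̄_j(m,n) = ∅`. -/
theorem exists_unvisited_branch (h d : ℕ) (hh : 1 ≤ h) (hd : 1 ≤ d) :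
    ∃ γ : ℚ, 1 / 2 < γ ∧ γ < 1 ∧ ∃ N : ℕ,
      ∀ (G : AFSG (ZMod 2) h) (Y : ℕ → ZMod 2) (n m : ℕ),
        N ≤ n → γ * (n : ℚ) ≤ (m : ℚ) → m ≤ n →
        ∃ j, 1 ≤ j ∧ j ≤ h ∧
          ∀ u ∈ Uset G Y m n, ((u : ℚ) ∉ VbarSet h d m n j) :=
  exists_unvisited_branch_general h d hh
end

section
/- Let h ≥ 2 be an integer, let 0 < η₁ < η₂ < ⋯ < η_{h−1} < 1 be reals, and let η ∈ (0,1) with η ∉ {η₁,…,η_{h−1}}. Define η_< = max({η_i : η_i < η} ∪ {0}) and η_> = min({η_i : η_i > η} ∪ {1}). Then M := max{η_{h−1}, η_</η, η/η_>} < 1, and for every γ ∈ (√M, 1) and every real c ≥ 0, there exists N such that for all real n ≥ N, all real m with γ·n ≤ m ≤ n, and every i ∈ {1,…,h−1}, the interval [η_i·m − c, η_i·n + c] is disjoint from the interval [m, n] and disjoint from the interval [η·m, η·n]. -/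
lemma disj_icc_of_lt {a b c d : ℝ} (h : b < c) :
    Disjoint (Set.Icc a b) (Set.Icc c d) := by
  rw [Set.disjoint_left]
  rintro x ⟨_, hx⟩ ⟨hx', _⟩
  linarith

/-- Let `h ≥ 2`, let `0 < η₁ < ⋯ < η_{h−1} < 1` be reals
(here `η : Fin (h−1) → ℝ`, strictly monotone), and let `η₀ ∈ (0,1)` avoid all
`η_i`.  With `η_< = max({η_i : η_i < η₀} ∪ {0})`,
`η_> = min({η_i : η_i > η₀} ∪ {1})`, and
`M = max{η_{h−1}, η_</η₀, η₀/η_>}`, we have `M < 1`, and for every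
`γ ∈ (√M, 1)` and every `c ≥ 0` there is an `N` such that for all reals
`n ≥ N` and `m ∈ [γn, n]` and every `i`, the interval
`[η_i·m − c, η_i·n + c]` is disjoint from `[m, n]` and from `[η₀·m, η₀·n]`. -/
theorem oblivious_head_gap (h : ℕ) (hh : 2 ≤ h) (η : Fin (h - 1) → ℝ)
    (hmono : StrictMono η) (hpos : ∀ i, 0 < η i) (hlt1 : ∀ i, η i < 1)
    (η₀ : ℝ) (hη₀ : η₀ ∈ Set.Ioo (0 : ℝ) 1) (havoid : ∀ i, η i ≠ η₀) :
    max (η ⟨h - 2, by omega⟩)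
        (max (sSup ({0} ∪ {x | (∃ i, η i = x) ∧ x < η₀}) / η₀)
             (η₀ / sInf ({1} ∪ {x | (∃ i, η i = x) ∧ η₀ < x}))) < 1 ∧
    ∀ γ ∈ Set.Ioo (Real.sqrt (max (η ⟨h - 2, by omega⟩)
        (max (sSup ({0} ∪ {x | (∃ i, η i = x) ∧ x < η₀}) / η₀)
             (η₀ / sInf ({1} ∪ {x | (∃ i, η i = x) ∧ η₀ < x}))))) 1,
      ∀ c : ℝ, 0 ≤ c → ∃ N : ℝ, ∀ n : ℝ, N ≤ n → ∀ m : ℝ, γ * n ≤ m → m ≤ n →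
        ∀ i : Fin (h - 1),
          Disjoint (Set.Icc (η i * m - c) (η i * n + c)) (Set.Icc m n) ∧
          Disjoint (Set.Icc (η i * m - c) (η i * n + c)) (Set.Icc (η₀ * m) (η₀ * n)) := by
  obtain ⟨hη₀0, hη₀1⟩ := hη₀
  set S : Set ℝ := {0} ∪ {x | (∃ i, η i = x) ∧ x < η₀} with hS
  set T : Set ℝ := {1} ∪ {x | (∃ i, η i = x) ∧ η₀ < x} with hT
  have hSfin : S.Finite := by
    apply (((Set.finite_range η).insert 0)).subset
    rintro x (rfl | ⟨⟨i, rfl⟩, -⟩)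
    · exact Set.mem_insert _ _
    · exact Set.mem_insert_of_mem _ ⟨i, rfl⟩
  have hTfin : T.Finite := by
    apply (((Set.finite_range η).insert 1)).subset
    rintro x (rfl | ⟨⟨i, rfl⟩, -⟩)
    · exact Set.mem_insert _ _
    · exact Set.mem_insert_of_mem _ ⟨i, rfl⟩
  have hSne : S.Nonempty := ⟨0, Or.inl rfl⟩
  have hTne : T.Nonempty := ⟨1, Or.inl rfl⟩
  set s := sSup S with hs
  set t := sInf T with ht
  have hsmem : s ∈ S := hSne.csSup_mem hSfin
  have htmem : t ∈ T := hTne.csInf_mem hTfin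
  have hs_lt : s < η₀ := by
    rcases hsmem with h0 | ⟨-, hlt⟩
    · simp only [Set.mem_singleton_iff] at h0; rw [h0]; exact hη₀0
    · exact hlt
  have hs_nonneg : 0 ≤ s := le_csSup hSfin.bddAbove (Or.inl rfl)
  have hs_ub : ∀ i, η i < η₀ → η i ≤ s := fun i hi =>
    le_csSup hSfin.bddAbove (Or.inr ⟨⟨i, rfl⟩, hi⟩)
  have ht_gt : η₀ < t := by
    rcases htmem with h1 | ⟨-, hgt⟩
    · simp only [Set.mem_singleton_iff] at h1; rw [h1]; exact hη₀1
    · exact hgt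
  have ht_pos : 0 < t := lt_trans hη₀0 ht_gt
  have ht_lb : ∀ i, η₀ < η i → t ≤ η i := fun i hi =>
    csInf_le hTfin.bddBelow (Or.inr ⟨⟨i, rfl⟩, hi⟩)
  set ηmax := η ⟨h - 2, by omega⟩ with hηmax
  have hmax_ub : ∀ i, η i ≤ ηmax := by
    intro i
    apply hmono.monotone
    rw [Fin.le_def]
    have := i.isLt
    simp only []
    omega
  set M := max ηmax (max (s / η₀) (η₀ / t)) with hM
  have hM1 : M < 1 := by
    apply max_lt (hlt1 _)
    apply max_lt
    · rwa [div_lt_one hη₀0]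
    · rwa [div_lt_one ht_pos]
  refine ⟨hM1, ?_⟩
  rintro γ ⟨hγl, hγ1⟩ c hc
  have hγ0 : 0 < γ := lt_of_le_of_lt (Real.sqrt_nonneg M) hγl
  have hMγ : M < γ ^ 2 := (Real.sqrt_lt' hγ0).mp hγl
  have hγsq : γ ^ 2 < γ := by nlinarith
  -- key bounds
  have hηmaxM : ηmax ≤ M := le_max_left _ _
  have hsM : s ≤ M * η₀ := by
    have : s / η₀ ≤ M := le_trans (le_max_left _ _) (le_max_right _ _)
    calc s = s / η₀ * η₀ := by field_simp
    _ ≤ M * η₀ := by nlinarith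
  have htM : η₀ ≤ M * t := by
    have : η₀ / t ≤ M := le_trans (le_max_right _ _) (le_max_right _ _)
    calc η₀ = η₀ / t * t := by field_simp
    _ ≤ M * t := by nlinarith
  have hδ1 : 0 < γ - ηmax := by nlinarith
  have hδ2 : 0 < γ * η₀ - s := by nlinarith
  have hδ3 : 0 < γ * t - η₀ := by nlinarith
  set δ := min (γ - ηmax) (min (γ * η₀ - s) (γ * t - η₀)) with hδ
  have hδpos : 0 < δ := lt_min hδ1 (lt_min hδ2 hδ3)
  refine ⟨(c + 1) / δ, ?_⟩
  intro n hn m hγm hmn i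
  have hN0 : 0 ≤ (c + 1) / δ := div_nonneg (by linarith) hδpos.le
  have hn0 : 0 ≤ n := le_trans hN0 hn
  have key : ∀ d : ℝ, δ ≤ d → c < d * n := by
    intro d hd
    have h1 : c + 1 ≤ δ * n := by
      rw [div_le_iff₀ hδpos] at hn
      linarith [hn]
    have h2 : δ * n ≤ d * n := mul_le_mul_of_nonneg_right hd hn0
    linarith
  have k1 : c < (γ - ηmax) * n := key _ (min_le_left _ _)
  have k2 : c < (γ * η₀ - s) * n := key _ (le_trans (min_le_right _ _) (min_le_left _ _))
  have k3 : c < (γ * t - η₀) * n := key _ (le_trans (min_le_right _ _) (min_le_right _ _)) 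
  have hηi : η i ≤ ηmax := hmax_ub i
  constructor
  · -- η i * n + c < m
    apply disj_icc_of_lt
    have h2 : η i * n ≤ ηmax * n := mul_le_mul_of_nonneg_right hηi hn0
    have e : (γ - ηmax) * n = γ * n - ηmax * n := by ring
    linarith
  · rcases lt_or_gt_of_ne (havoid i) with hlt | hgt
    · -- η i < η₀ : η i * n + c < η₀ * m
      apply disj_icc_of_lt
      have h1 : η i ≤ s := hs_ub i hlt
      have h2 : η i * n ≤ s * n := mul_le_mul_of_nonneg_right h1 hn0
      have h3 : η₀ * (γ * n) ≤ η₀ * m := mul_le_mul_of_nonneg_left hγm hη₀0.le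
      have e : (γ * η₀ - s) * n = η₀ * (γ * n) - s * n := by ring
      linarith
    · -- η₀ < η i : η₀ * n < η i * m - c
      refine (disj_icc_of_lt ?_).symm
      have h1 : t ≤ η i := ht_lb i hgt
      have h2 : t * (γ * n) ≤ η i * m :=
        mul_le_mul h1 hγm (mul_nonneg hγ0.le hn0) (hpos i).le
      have e : (γ * t - η₀) * n = t * (γ * n) - η₀ * n := by ring
      linarith
end
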